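/- arXiv:2509.01811 — 2 statements merged into one kernel-verified Lean document; each statement's English description precedes it below -/
import Mathlib

section
/- The Constrained Allocation Problem has at most one solution: if (θ₁,…,θ_k) and (θ̂₁,…,θ̂_k) both satisfy Σθ_i = b, θ₁ ≤ θ₂ ≤ ⋯ ≤ θ_k, the ratio condition s'(θ_j)/s'(θ_i) = c_j/c_i whenever i < j and θ_j ≥ θ_i > 0, and s'(θ_j)/s'(0) ≥ c_j/c_i whenever i < j and θ_j > θ_i = 0, then θ_i = θ̂_i for all i. -/
open Set Finset

/-- A tuple `θ : Fin k → ℝ` is a solution to the Constrained Allocation Problem (CAP). -/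
def IsCAPSolution (k : ℕ) (b : ℝ) (s' : ℝ → ℝ) (c : Fin k → ℝ) (θ : Fin k → ℝ) : Prop :=
  (∀ i, θ i ∈ Icc (0:ℝ) b) ∧
  (∑ i, θ i = b) ∧
  Monotone θ ∧
  (∀ i j : Fin k, i < j → 0 < θ i → θ i ≤ θ j → s' (θ j) / s' (θ i) = c j / c i) ∧
  (∀ i j : Fin k, i < j → θ i = 0 → 0 < θ j → s' (θ j) / s' 0 ≥ c j / c i)

/-- The Constrained Allocation Problem has at most one solution. -/
theorem stmt_1 (B b : ℝ) (hB : 0 < B) (hb : 0 < b) (hbB : b ≤ B)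
    (k : ℕ) (hk : 2 ≤ k) (c : Fin k → ℝ)
    (hcpos : ∀ i, 0 < c i) (hcanti : Antitone c)
    (s s' : ℝ → ℝ)
    (hderiv : ∀ θ ∈ Icc (0:ℝ) B, HasDerivAt s (s' θ) θ)
    (hs0 : s 0 = 0)
    (hcont : ContinuousOn s' (Icc (0:ℝ) B))
    (hpos : ∀ θ ∈ Icc (0:ℝ) B, 0 < s' θ)
    (hanti : StrictAntiOn s' (Icc (0:ℝ) B))
    (θ θhat : Fin k → ℝ)
    (hθ : IsCAPSolution k b s' c θ)
    (hθhat : IsCAPSolution k b s' c θhat) :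
    θ = θhat := by
  set L : Fin k := ⟨k - 1, by omega⟩ with hL
  have h0B : (0:ℝ) ∈ Icc (0:ℝ) B := ⟨le_refl _, hB.le⟩
  have main : ∀ φ ψ : Fin k → ℝ, IsCAPSolution k b s' c φ → IsCAPSolution k b s' c ψ →
      φ L ≤ ψ L → ∀ i, φ i ≤ ψ i := by
    rintro φ ψ ⟨hm1, hs1, hmo1, hr1, hz1⟩ ⟨hm2, hs2, hmo2, hr2, hz2⟩ hlast i
    have hmemB1 : ∀ x, φ x ∈ Icc (0:ℝ) B := fun x => ⟨(hm1 x).1, le_trans (hm1 x).2 hbB⟩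
    have hmemB2 : ∀ x, ψ x ∈ Icc (0:ℝ) B := fun x => ⟨(hm2 x).1, le_trans (hm2 x).2 hbB⟩
    -- last components are positive
    have hφL : 0 < φ L := by
      by_contra h
      push_neg at h
      have hall : ∀ j, φ j = 0 := by
        intro j
        have hjL : j ≤ L := by
          rw [Fin.le_def]; have := j.isLt; simp only [hL]; omega
        exact le_antisymm (le_trans (hmo1 hjL) h) (hm1 j).1
      rw [Finset.sum_congr rfl (fun j _ => hall j)] at hs1
      simp at hs1; linarith
    have hψL : 0 < ψ L := lt_of_lt_of_le hφL hlast
    have hiL : i ≤ L := by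
      rw [Fin.le_def]; have := i.isLt; simp only [hL]; omega
    rcases eq_or_lt_of_le hiL with heq | hilt
    · rw [heq]; exact hlast
    · rcases eq_or_lt_of_le (hm1 i).1 with hzero | hφi
      · rw [← hzero]; exact (hm2 i).1
      · -- φ i > 0
        have hφiL : φ i ≤ φ L := hmo1 hiL
        have e1 := hr1 i L hilt hφi hφiL
        have hs'φi : 0 < s' (φ i) := hpos _ (hmemB1 i)
        have hs'φL : 0 < s' (φ L) := hpos _ (hmemB1 L)
        have hs'ψL : 0 < s' (ψ L) := hpos _ (hmemB2 L)
        have hs'0 : 0 < s' 0 := hpos _ h0B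
        have hci : 0 < c i := hcpos i
        have hcL : 0 < c L := hcpos L
        have e1' : s' (φ L) * c i = c L * s' (φ i) := by
          rw [div_eq_div_iff hs'φi.ne' hci.ne'] at e1; linarith
        have hmonos' : s' (ψ L) ≤ s' (φ L) :=
          (hanti.antitoneOn (hmemB1 L) (hmemB2 L)) hlast
        rcases eq_or_lt_of_le (hm2 i).1 with hψzero | hψi
        · -- ψ i = 0 : contradiction
          exfalso
          have e2 := hz2 i L hilt hψzero.symm hψL
          have e2' : s' (ψ L) * c i ≥ c L * s' 0 := by
            rw [ge_iff_le, div_le_div_iff₀ hci hs'0] at e2; linarith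
          have h1 : s' (φ i) * c L ≥ s' 0 * c L := by nlinarith
          have h2 : s' (φ i) ≥ s' 0 := le_of_mul_le_mul_right (by linarith) hcL
          have : s' (φ i) < s' 0 := hanti h0B (hmemB1 i) hφi
          linarith
        · -- ψ i > 0
          have hψiL : ψ i ≤ ψ L := hmo2 hiL
          have e2 := hr2 i L hilt hψi hψiL
          have hs'ψi : 0 < s' (ψ i) := hpos _ (hmemB2 i)
          have e2' : s' (ψ L) * c i = c L * s' (ψ i) := by
            rw [div_eq_div_iff hs'ψi.ne' hci.ne'] at e2; linarith
          have hle : s' (ψ i) ≤ s' (φ i) := by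
            have : c L * s' (ψ i) ≤ c L * s' (φ i) := by nlinarith
            exact le_of_mul_le_mul_left this hcL
          by_contra h
          push_neg at h
          have : s' (φ i) < s' (ψ i) := hanti (hmemB2 i) (hmemB1 i) h
          linarith
  have sumeq : ∑ i, θ i = ∑ i, θhat i := by rw [hθ.2.1, hθhat.2.1]
  rcases le_total (θ L) (θhat L) with h | h
  · have hle := main θ θhat hθ hθhat h
    funext i
    by_contra hne
    have hlt : θ i < θhat i := lt_of_le_of_ne (hle i) hne
    have := Finset.sum_lt_sum (fun j _ => hle j) ⟨i, Finset.mem_univ i, hlt⟩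
    linarith [sumeq]
  · have hle := main θhat θ hθhat hθ h
    funext i
    by_contra hne
    have hlt : θhat i < θ i := lt_of_le_of_ne (hle i) (Ne.symm hne)
    have := Finset.sum_lt_sum (fun j _ => hle j) ⟨i, Finset.mem_univ i, hlt⟩
    linarith [sumeq]
end

section
/- If h* solves the Water-Filling Problem (β(h*) = b), then the tuple θ_i = θ_i(h*), i = 1,…,k, satisfies all four constraints of the Constrained Allocation Problem: Σθ_i = b; θ₁ ≤ ⋯ ≤ θ_k; s'(θ_j)/s'(θ_i) = c_j/c_i whenever i < j and θ_j ≥ θ_i > 0; and s'(θ_j)/s'(0) ≥ c_j/c_i whenever i < j and θ_j > θ_i = 0. -/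
open Set Finset

/-!
Each `θ_i(h*)` is the inverse of `s'` at the level `c_i g(h*)`, clamped to `[0, b]`, hence a
decreasing function of that level. Two of the `θ_i` already exhaust the budget `b` when `g(h*) ≤ 0`,
so `g(h*) > 0` and the levels decrease with `i`, making the `θ_i` increase. If `0 < θ_i ≤ θ_j`
then `θ_i + θ_j ≤ b` puts both strictly inside `(0, b)`, where `s'(θ) = c g(h*)` exactly; and
`θ_i = 0 < θ_j` means `s'(0) ≤ c_i g(h*)` while `c_j g(h*) ≤ s'(θ_j)`.
-/

theorem add_le_sum_of_ne {ι M : Type*} [Fintype ι] [DecidableEq ι] [AddCommMonoid M]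
    [PartialOrder M] [IsOrderedAddMonoid M] {f : ι → M} (hf : ∀ i, 0 ≤ f i) {i j : ι}
    (hij : i ≠ j) : f i + f j ≤ ∑ k, f k := by
  rw [← Finset.sum_pair hij]
  exact Finset.sum_le_sum_of_subset_of_nonneg (Finset.subset_univ _) fun k _ _ => hf k

/-- The paper's `θ_i(h)` is `clampedInv s' sInv b (c i * g h)`. -/
noncomputable def clampedInv (f finv : ℝ → ℝ) (b y : ℝ) : ℝ :=
  if f 0 ≤ y then 0 else if y ≤ f b then b else finv y

section clampedInv

variable {f finv : ℝ → ℝ} {b y : ℝ}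

theorem clampedInv_of_le (hy : f 0 ≤ y) : clampedInv f finv b y = 0 := if_pos hy

theorem clampedInv_of_le_of_lt (hyb : y ≤ f b) (hy0 : y < f 0) : clampedInv f finv b y = b := by
  rw [clampedInv, if_neg hy0.not_ge, if_pos hyb]

theorem clampedInv_of_mem_Ioo (hy : y ∈ Ioo (f b) (f 0)) : clampedInv f finv b y = finv y := by
  rw [clampedInv, if_neg hy.2.not_ge, if_neg hy.1.not_ge]

theorem clampedInv_mem_Icc (hb : 0 ≤ b) (hmaps : MapsTo finv (Icc (f b) (f 0)) (Icc 0 b)) :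
    clampedInv f finv b y ∈ Icc 0 b := by
  unfold clampedInv
  split_ifs with hy0 hyb
  · exact ⟨le_rfl, hb⟩
  · exact ⟨hb, le_rfl⟩
  · exact hmaps ⟨(not_le.1 hyb).le, (not_le.1 hy0).le⟩

theorem clampedInv_antitone (hb : 0 ≤ b) (hf : StrictAntiOn f (Icc 0 b))
    (hmaps : MapsTo finv (Icc (f b) (f 0)) (Icc 0 b))
    (hinv : RightInvOn finv f (Icc (f b) (f 0))) : Antitone (clampedInv f finv b) := by
  intro x y hxy
  rcases le_or_gt (f 0) y with hy0 | hy0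
  · rw [clampedInv_of_le hy0]
    exact (clampedInv_mem_Icc hb hmaps).1
  rcases le_or_gt x (f b) with hxb | hxb
  · rw [clampedInv_of_le_of_lt hxb (hxy.trans_lt hy0)]
    exact (clampedInv_mem_Icc hb hmaps).2
  have hx : x ∈ Icc (f b) (f 0) := ⟨hxb.le, hxy.trans hy0.le⟩
  have hy : y ∈ Icc (f b) (f 0) := ⟨hxb.le.trans hxy, hy0.le⟩
  rw [clampedInv_of_mem_Ioo ⟨hxb, hxy.trans_lt hy0⟩, clampedInv_of_mem_Ioo ⟨hxb.trans_le hxy, hy0⟩]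
  by_contra! hlt
  have := hf (hmaps hx) (hmaps hy) hlt
  rw [hinv hx, hinv hy] at this
  exact this.not_ge hxy

theorem apply_clampedInv_of_mem_Ioo (hinv : RightInvOn finv f (Icc (f b) (f 0)))
    (h : clampedInv f finv b y ∈ Ioo 0 b) : f (clampedInv f finv b y) = y := by
  unfold clampedInv at h ⊢
  split_ifs at h ⊢ with hy0 hyb
  · exact absurd h.1 (lt_irrefl 0)
  · exact absurd h.2 (lt_irrefl b)
  · exact hinv ⟨(not_le.1 hyb).le, (not_le.1 hy0).le⟩

theorem apply_zero_le_of_clampedInv_eq_zero (hb : 0 < b)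
    (hinv : RightInvOn finv f (Icc (f b) (f 0))) (h : clampedInv f finv b y = 0) : f 0 ≤ y := by
  unfold clampedInv at h
  split_ifs at h with hy0 hyb
  · exact hy0
  · exact absurd h hb.ne'
  · have := hinv ⟨(not_le.1 hyb).le, (not_le.1 hy0).le⟩
    rw [h] at this
    exact this.le

theorem le_apply_clampedInv_of_pos (hinv : RightInvOn finv f (Icc (f b) (f 0)))
    (h : 0 < clampedInv f finv b y) : y ≤ f (clampedInv f finv b y) := by
  unfold clampedInv at h ⊢
  split_ifs at h ⊢ with hy0 hyb
  · exact absurd h (lt_irrefl 0)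
  · exact hyb
  · exact (hinv ⟨(not_le.1 hyb).le, (not_le.1 hy0).le⟩).ge

end clampedInv

/-- If `h*` solves the Water-Filling Problem (`β(h*) = b`), then the tuple
`θ_i = θ_i(h*)` satisfies all four constraints of the Constrained Allocation Problem. -/
theorem stmt_4 (B b : ℝ) (hb : 0 < b) (hbB : b ≤ B)
    (s' : ℝ → ℝ)
    (hpos : ∀ θ ∈ Icc (0:ℝ) B, 0 < s' θ)
    (hanti : StrictAntiOn s' (Icc (0:ℝ) B))
    (sInv : ℝ → ℝ)
    (hInv₁ : ∀ y ∈ Icc (s' b) (s' 0), s' (sInv y) = y ∧ sInv y ∈ Icc (0:ℝ) b)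
    (k : ℕ) (hk : 2 ≤ k)
    (c : Fin k → ℝ) (hcpos : ∀ i, 0 < c i) (hcanti : Antitone c)
    (g : ℝ → ℝ)
    (θfun : Fin k → ℝ → ℝ)
    (hθfun : ∀ i h, θfun i h =
      if s' 0 ≤ c i * g h then 0
      else if c i * g h ≤ s' b then b
      else sInv (c i * g h))
    (hstar : ℝ)
    (hWFP : ∑ i, θfun i hstar = b) :
    (∑ i, θfun i hstar = b) ∧
    (Monotone fun i => θfun i hstar) ∧
    (∀ i j : Fin k, i < j → 0 < θfun i hstar → θfun i hstar ≤ θfun j hstar →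
      s' (θfun j hstar) / s' (θfun i hstar) = c j / c i) ∧
    (∀ i j : Fin k, i < j → θfun i hstar = 0 → 0 < θfun j hstar →
      s' (θfun j hstar) / s' 0 ≥ c j / c i) := by
  have hbB' : b ∈ Icc 0 B := ⟨hb.le, hbB⟩
  have hs'b : 0 < s' b := hpos b hbB'
  have hs'b0 : s' b < s' 0 := hanti ⟨le_rfl, hb.le.trans hbB⟩ hbB' hb
  have hanti' : StrictAntiOn s' (Icc 0 b) := hanti.mono (Icc_subset_Icc_right hbB)
  have hmaps : MapsTo sInv (Icc (s' b) (s' 0)) (Icc 0 b) := fun y hy => (hInv₁ y hy).2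
  have hinv : RightInvOn sInv s' (Icc (s' b) (s' 0)) := fun y hy => (hInv₁ y hy).1
  have hθ : ∀ i, θfun i hstar = clampedInv s' sInv b (c i * g hstar) := fun i => hθfun i hstar
  have hθmem : ∀ i, θfun i hstar ∈ Icc 0 b := fun i => hθ i ▸ clampedInv_mem_Icc hb.le hmaps
  have hpair : ∀ i j, i ≠ j → θfun i hstar + θfun j hstar ≤ b := fun i j hij =>
    hWFP ▸ add_le_sum_of_ne (fun i => (hθmem i).1) hij
  have hG : 0 < g hstar := by
    by_contra! hG
    have hθb : ∀ i, θfun i hstar = b := fun i => (hθ i).trans <|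
      clampedInv_of_le_of_lt (by nlinarith [hcpos i]) (by nlinarith [hcpos i])
    have := hpair ⟨0, by omega⟩ ⟨1, by omega⟩ (by simp [Fin.ext_iff])
    linarith [hθb ⟨0, by omega⟩, hθb ⟨1, by omega⟩]
  refine ⟨hWFP, ?_, ?_, ?_⟩
  · simp only [hθ]
    exact (clampedInv_antitone hb.le hanti' hmaps hinv).comp
      fun i j hij => mul_le_mul_of_nonneg_right (hcanti hij) hG.le
  · intro i j hij hi hle
    have hsum := hpair i j hij.ne
    simp only [hθ] at hi hle hsum ⊢
    rw [apply_clampedInv_of_mem_Ioo hinv ⟨hi, by linarith⟩,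
      apply_clampedInv_of_mem_Ioo hinv ⟨by linarith, by linarith⟩]
    exact mul_div_mul_right _ _ hG.ne'
  · intro i j _ hi hj
    simp only [hθ] at hi hj ⊢
    have hci := apply_zero_le_of_clampedInv_eq_zero hb hinv hi
    have hcj := le_apply_clampedInv_of_pos hinv hj
    rw [ge_iff_le, div_le_div_iff₀ (hcpos i) (hs'b.trans hs'b0)]
    nlinarith [hcpos i, hcpos j]
end
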